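/- Let (m_i) and (n_i) be QMF systems on 𝕋 with associated Cuntz representations S_i^{(m)}, S_i^{(n)} on L²(𝕋). Then for each i, j, the operator S_i^{(n)*} S_j^{(m)} is multiplication by the bounded function A_{i,j}(z) = Σ_{w: w^N = z} conj(n_i(w)) m_j(w), and the matrix-valued function A = (A_{i,j}) takes values in U_N(ℂ) almost everywhere. -/

import Mathlib

open MeasureTheory Complex
open scoped ComplexConjugate ENNReal

noncomputable instance : MeasurableSpace Circle := borel Circle
instance : BorelSpace Circle := ⟨rfl⟩

/-- Normalized Haar measure on the circle `𝕋` (Haar measure on a compact group is normalized). -/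
noncomputable def μC : Measure Circle := Measure.haar

/-- A fixed measurable branch of the `N`-th root on the circle. -/
noncomputable def nthRoot (N : ℕ) (z : Circle) : Circle := Circle.exp ((z : ℂ).arg / N)

/-- The `N`-th roots of `z` : `σ_k(z) = e^{2πik/N} z^{1/N}`, `k = 0, …, N-1`. -/
noncomputable def circRoots (N : ℕ) (z : Circle) (k : Fin N) : Circle :=
  Circle.exp (2 * Real.pi * (k : ℝ) / N) * nthRoot N z

/-- `rootSum N F z = Σ_{w : w^N = z} F w`, the sum over the `N`-th roots of `z`. -/
noncomputable def rootSum (N : ℕ) (F : Circle → ℂ) (z : Circle) : ℂ :=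
  ∑ k : Fin N, F (circRoots N z k)

instance : μC.IsHaarMeasure := inferInstanceAs Measure.haar.IsHaarMeasure

noncomputable def zetaN (N : ℕ) : Circle := Circle.exp (2 * Real.pi / N)

lemma circle_exp_nat_mul (n : ℕ) (x : ℝ) : Circle.exp (n * x) = Circle.exp x ^ n := by
  induction n with
  | zero => simp
  | succ n ih => push_cast; rw [add_mul, one_mul, Circle.exp_add, ih, pow_succ]

lemma circle_exp_int_mul (n : ℤ) (x : ℝ) : Circle.exp (n * x) = Circle.exp x ^ n := by
  cases n with
  | ofNat n => simpa using circle_exp_nat_mul n x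
  | negSucc n =>
      rw [Int.cast_negSucc, neg_mul, Circle.exp_neg, circle_exp_nat_mul, zpow_negSucc]

lemma zetaN_pow {N : ℕ} (hN : N ≠ 0) : zetaN N ^ N = 1 := by
  rw [zetaN, ← circle_exp_nat_mul, mul_div_cancel₀]
  · exact Circle.exp_two_pi
  · exact_mod_cast hN

lemma pow_mod_eq {g : Circle} {N : ℕ} (h : g ^ N = 1) (a : ℕ) : g ^ (a % N) = g ^ a := by
  conv_rhs => rw [← Nat.div_add_mod a N]
  rw [pow_add, pow_mul, h, one_pow, one_mul]

lemma circRoots_eq (N : ℕ) (z : Circle) (k : Fin N) :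
    circRoots N z k = zetaN N ^ (k : ℕ) * nthRoot N z := by
  rw [circRoots, show (2 * Real.pi * (k : ℝ) / N) = (k : ℝ) * (2 * Real.pi / N) by ring,
    circle_exp_nat_mul, zetaN]

lemma nthRoot_pow {N : ℕ} (hN : N ≠ 0) (z : Circle) :
    ∃ s : ℤ, nthRoot N (z ^ N) = zetaN N ^ s * z := by
  have hN' : (N : ℝ) ≠ 0 := by exact_mod_cast hN
  have h2 : z ^ N = Circle.exp (N * (z : ℂ).arg) := by
    rw [circle_exp_nat_mul, Circle.exp_arg]
  have h3 : Circle.exp ((z ^ N : Circle) : ℂ).arg = Circle.exp (N * (z : ℂ).arg) := by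
    rw [Circle.exp_arg, h2]
  obtain ⟨s, hs⟩ := Circle.exp_eq_exp.mp h3
  refine ⟨s, ?_⟩
  rw [nthRoot, hs, add_div, mul_div_cancel_left₀ _ hN', Circle.exp_add, mul_comm]
  congr 1
  · rw [show (s : ℝ) * (2 * Real.pi) / N = (s : ℝ) * (2 * Real.pi / N) by ring,
      circle_exp_int_mul, zetaN]
  · exact Circle.exp_arg z

lemma circRoots_pow_eq {N : ℕ} (hN : N ≠ 0) (z : Circle) :
    ∃ t : Fin N, ∀ k : Fin N,
      circRoots N (z ^ N) k = zetaN N ^ ((k + t : Fin N) : ℕ) * z := by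
  haveI : NeZero N := ⟨hN⟩
  obtain ⟨s, hs⟩ := nthRoot_pow hN z
  have hNZ : (N : ℤ) ≠ 0 := by exact_mod_cast hN
  have hr0 : (0 : ℤ) ≤ s % N := Int.emod_nonneg s hNZ
  have hrlt : s % N < N := Int.emod_lt_of_pos s (by positivity)
  set r : ℕ := (s % N).toNat with hrdef
  have hrN : r < N := by omega
  have hzs : zetaN N ^ s = zetaN N ^ r := by
    conv_lhs => rw [show s = (N : ℤ) * (s / N) + s % N from (Int.mul_ediv_add_emod s N).symm]
    rw [zpow_add, zpow_mul, zpow_natCast, zetaN_pow hN, one_zpow, one_mul,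
      ← Int.toNat_of_nonneg hr0, zpow_natCast]
  refine ⟨⟨r, hrN⟩, fun k => ?_⟩
  have hv : ((k + (⟨r, hrN⟩ : Fin N) : Fin N) : ℕ) = ((k : ℕ) + r) % N := by
    simp [Fin.val_add]
  rw [circRoots_eq, hs, hzs, ← mul_assoc, ← pow_add, hv, pow_mod_eq (zetaN_pow hN)]

lemma rootSum_pow {N : ℕ} (hN : N ≠ 0) (F : Circle → ℂ) (z : Circle) :
    rootSum N F (z ^ N) = ∑ k : Fin N, F (zetaN N ^ (k : ℕ) * z) := by
  haveI : NeZero N := ⟨hN⟩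
  obtain ⟨t, ht⟩ := circRoots_pow_eq hN z
  rw [rootSum, ← Equiv.sum_comp (Equiv.addRight t) (fun k : Fin N => F (zetaN N ^ (k : ℕ) * z))]
  exact Finset.sum_congr rfl fun k _ => by rw [ht k]; rfl

lemma measurePreserving_powC {N : ℕ} (hN : N ≠ 0) :
    MeasurePreserving (fun z : Circle => z ^ N) μC μC := by
  have hsurj : Function.Surjective (fun z : Circle => z ^ N) := by
    intro z
    refine ⟨Circle.exp ((z : ℂ).arg / N), ?_⟩
    show Circle.exp ((z : ℂ).arg / N) ^ N = z
    rw [← circle_exp_nat_mul, mul_comm, div_mul_cancel₀ _ (by exact_mod_cast hN : (N : ℝ) ≠ 0)]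
    exact Circle.exp_arg z
  exact MonoidHom.measurePreserving (μ := μC) (ν := μC) (f := powMonoidHom N) (continuous_pow N) hsurj rfl

lemma measurable_coeC : Measurable (fun z : Circle => (z : ℂ)) := by
  have hcoe : Continuous (fun z : Circle => (z : ℂ)) := continuous_subtype_val
  exact hcoe.measurable

lemma measurable_nthRoot (N : ℕ) : Measurable (nthRoot N) :=
  Circle.exp.continuous.measurable.comp
    ((Complex.measurable_arg.comp measurable_coeC).div_const _)

lemma measurable_circRoots (N : ℕ) (k : Fin N) : Measurable fun z => circRoots N z k :=
  ((continuous_mul_left _).measurable).comp (measurable_nthRoot N)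

lemma measurable_rootSum {N : ℕ} {F : Circle → ℂ} (hF : Measurable F) :
    Measurable (rootSum N F) :=
  Finset.measurable_sum _ fun k _ => hF.comp (measurable_circRoots N k)

lemma rootSum_bdd {N : ℕ} {F : Circle → ℂ} {C : ℝ} (hC : ∀ w, ‖F w‖ ≤ C) (z : Circle) :
    ‖rootSum N F z‖ ≤ N * C := by
  calc ‖rootSum N F z‖ ≤ ∑ k : Fin N, ‖F (circRoots N z k)‖ := norm_sum_le _ _
    _ ≤ ∑ _k : Fin N, C := Finset.sum_le_sum fun k _ => hC _
    _ = N * C := by simp [mul_comm]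

lemma key_int {N : ℕ} (hN : N ≠ 0) (Φ Ψ : Circle → ℂ) (hΦm : Measurable Φ)
    {C : ℝ} (hΦb : ∀ w, ‖Φ w‖ ≤ C) (hΨ : Integrable Ψ μC) :
    ∫ z, rootSum N Φ z * Ψ z ∂μC = N * ∫ z, Φ z * Ψ (z ^ N) ∂μC := by
  have hmp := measurePreserving_powC hN
  have hzN : ∀ (k : Fin N) (z : Circle), (zetaN N ^ (k : ℕ) * z) ^ N = z ^ N := by
    intro k z
    rw [mul_pow, ← pow_mul, mul_comm (k : ℕ) N, pow_mul, zetaN_pow hN, one_pow, one_mul]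
  have hint1 : Integrable (fun z => rootSum N Φ z * Ψ z) μC :=
    hΨ.bdd_mul (measurable_rootSum hΦm).aestronglyMeasurable (Filter.Eventually.of_forall (rootSum_bdd hΦb))
  have h1 : ∫ z, rootSum N Φ z * Ψ z ∂μC
      = ∫ z, rootSum N Φ (z ^ N) * Ψ (z ^ N) ∂μC := by
    conv_lhs => rw [← hmp.map_eq]
    exact integral_map hmp.measurable.aemeasurable (by rw [hmp.map_eq]; exact hint1.1)
  have h2 : ∀ z : Circle, rootSum N Φ (z ^ N) * Ψ (z ^ N)
      = ∑ k : Fin N, Φ (zetaN N ^ (k : ℕ) * z) * Ψ ((zetaN N ^ (k : ℕ) * z) ^ N) := by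
    intro z
    rw [rootSum_pow hN, Finset.sum_mul]
    exact Finset.sum_congr rfl fun k _ => by rw [hzN]
  have hΨN : Integrable (fun z => Ψ (z ^ N)) μC := by
    have := (hmp.map_eq.symm ▸ hΨ : Integrable Ψ (μC.map fun z : Circle => z ^ N))
    exact this.comp_measurable hmp.measurable
  have hintk : ∀ k : Fin N,
      Integrable (fun z => Φ (zetaN N ^ (k : ℕ) * z) * Ψ ((zetaN N ^ (k : ℕ) * z) ^ N)) μC := by
    intro k
    have : Integrable (fun z => Φ (zetaN N ^ (k : ℕ) * z) * Ψ (z ^ N)) μC :=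
      hΨN.bdd_mul ((hΦm.comp ((continuous_mul_left _).measurable)).aestronglyMeasurable)
        (Filter.Eventually.of_forall fun z => hΦb _)
    exact this.congr (Filter.Eventually.of_forall fun z => by simp only [hzN])
  calc ∫ z, rootSum N Φ z * Ψ z ∂μC
      = ∫ z, ∑ k : Fin N, Φ (zetaN N ^ (k : ℕ) * z) * Ψ ((zetaN N ^ (k : ℕ) * z) ^ N) ∂μC := by
        rw [h1]; exact integral_congr_ae (Filter.Eventually.of_forall h2)
    _ = ∑ k : Fin N, ∫ z, Φ (zetaN N ^ (k : ℕ) * z) * Ψ ((zetaN N ^ (k : ℕ) * z) ^ N) ∂μC :=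
        integral_finset_sum _ fun k _ => hintk k
    _ = ∑ _k : Fin N, ∫ z, Φ z * Ψ (z ^ N) ∂μC :=
        Finset.sum_congr rfl fun k _ =>
          integral_mul_left_eq_self (μ := μC) (fun z => Φ z * Ψ (z ^ N)) (zetaN N ^ (k : ℕ))
    _ = N * ∫ z, Φ z * Ψ (z ^ N) ∂μC := by simp [mul_comm]

lemma unitary_of_qmf {N : ℕ} (m n : Fin N → Circle → ℂ) (z : Circle)
    (hm : ∀ i j, rootSum N (fun w => conj (m i w) * m j w) z = if i = j then 1 else 0)
    (hn : ∀ i j, rootSum N (fun w => conj (n i w) * n j w) z = if i = j then 1 else 0) :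
    (Matrix.of fun i j : Fin N => rootSum N (fun w => conj (n i w) * m j w) z)
      ∈ Matrix.unitaryGroup (Fin N) ℂ := by
  set M : Matrix (Fin N) (Fin N) ℂ := Matrix.of fun k j => m j (circRoots N z k) with hMdef
  set Nm : Matrix (Fin N) (Fin N) ℂ := Matrix.of fun k i => n i (circRoots N z k) with hNdef
  have hM : M ∈ Matrix.unitaryGroup (Fin N) ℂ := by
    rw [Matrix.mem_unitaryGroup_iff']
    ext i j
    have : (star M * M) i j = rootSum N (fun w => conj (m i w) * m j w) z := by
      simp only [Matrix.mul_apply, Matrix.star_eq_conjTranspose, Matrix.conjTranspose_apply,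
        hMdef, Matrix.of_apply, rootSum, RCLike.star_def]
    rw [this, hm i j, Matrix.one_apply]
  have hNm : Nm ∈ Matrix.unitaryGroup (Fin N) ℂ := by
    rw [Matrix.mem_unitaryGroup_iff']
    ext i j
    have : (star Nm * Nm) i j = rootSum N (fun w => conj (n i w) * n j w) z := by
      simp only [Matrix.mul_apply, Matrix.star_eq_conjTranspose, Matrix.conjTranspose_apply,
        hNdef, Matrix.of_apply, rootSum, RCLike.star_def]
    rw [this, hn i j, Matrix.one_apply]
  have htar : (Matrix.of fun i j : Fin N => rootSum N (fun w => conj (n i w) * m j w) z)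
      = star Nm * M := by
    ext i j
    simp only [Matrix.mul_apply, Matrix.star_eq_conjTranspose, Matrix.conjTranspose_apply,
      hMdef, hNdef, Matrix.of_apply, rootSum, RCLike.star_def]
  rw [htar]
  exact mul_mem (Unitary.star_mem hNm) hM

/-- For two QMF Cuntz representations `S^{(m)}`, `S^{(n)}`, the operator
`S_i^{(n)*} S_j^{(m)}` is multiplication by `A_{ij}(z) = Σ_{w^N=z} conj(n_i(w)) m_j(w)`,
and `A = (A_{ij})` is a.e. unitary. -/
theorem stmt17 (N : ℕ) (hN : 2 ≤ N) (m n : Fin N → Circle → ℂ)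
    (hm_meas : ∀ i, Measurable (m i)) (hm_bdd : ∀ i, ∃ C, ∀ z, ‖m i z‖ ≤ C)
    (hn_meas : ∀ i, Measurable (n i)) (hn_bdd : ∀ i, ∃ C, ∀ z, ‖n i z‖ ≤ C)
    (hQMFm : ∀ᵐ z ∂μC, ∀ i j,
      rootSum N (fun w => conj (m i w) * m j w) z = if i = j then 1 else 0)
    (hQMFn : ∀ᵐ z ∂μC, ∀ i j,
      rootSum N (fun w => conj (n i w) * n j w) z = if i = j then 1 else 0)
    (Sm Sn : Fin N → (Lp ℂ 2 μC →L[ℂ] Lp ℂ 2 μC))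
    (hSm : ∀ i (f : Lp ℂ 2 μC),
      (Sm i f : Circle → ℂ) =ᵐ[μC] fun z => (Real.sqrt N : ℂ) * m i z * f (z ^ N))
    (hSn : ∀ i (f : Lp ℂ 2 μC),
      (Sn i f : Circle → ℂ) =ᵐ[μC] fun z => (Real.sqrt N : ℂ) * n i z * f (z ^ N)) :
    (∀ i j (f : Lp ℂ 2 μC),
      (ContinuousLinearMap.adjoint (Sn i) (Sm j f) : Circle → ℂ) =ᵐ[μC]
        fun z => rootSum N (fun w => conj (n i w) * m j w) z * f z) ∧
    (∀ᵐ z ∂μC, (Matrix.of fun i j : Fin N =>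
        rootSum N (fun w => conj (n i w) * m j w) z) ∈ Matrix.unitaryGroup (Fin N) ℂ) := by

  have hN0 : N ≠ 0 := by omega
  constructor
  · intro i j f
    obtain ⟨Cn, hCn⟩ := hn_bdd i
    obtain ⟨Cm, hCm⟩ := hm_bdd j
    have hCn0 : 0 ≤ Cn := le_trans (norm_nonneg _) (hCn 1)
    have hΦm : Measurable (fun w => conj (n i w) * m j w) :=
      (Complex.continuous_conj.measurable.comp (hn_meas i)).mul (hm_meas j)
    have hΦb : ∀ w, ‖conj (n i w) * m j w‖ ≤ Cn * Cm := fun w => by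
      rw [norm_mul, RCLike.norm_conj]
      exact mul_le_mul (hCn w) (hCm w) (norm_nonneg _) hCn0
    have hAm : Measurable (rootSum N fun w => conj (n i w) * m j w) := measurable_rootSum hΦm
    have hAb : ∀ z, ‖rootSum N (fun w => conj (n i w) * m j w) z‖ ≤ N * (Cn * Cm) :=
      rootSum_bdd hΦb
    have hAf : MemLp (fun z => rootSum N (fun w => conj (n i w) * m j w) z
        * (f : Circle → ℂ) z) 2 μC :=
      MemLp.of_le_mul (Lp.memLp f)
        (hAm.aestronglyMeasurable.mul (Lp.aestronglyMeasurable f))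
        (Filter.Eventually.of_forall fun z => by
          rw [norm_mul]; exact mul_le_mul_of_nonneg_right (hAb z) (norm_nonneg _))
    have key : ContinuousLinearMap.adjoint (Sn i) (Sm j f) = hAf.toLp _ := by
      apply ext_inner_left ℂ
      intro g
      rw [ContinuousLinearMap.adjoint_inner_right, L2.inner_def, L2.inner_def]
      simp_rw [RCLike.inner_apply]
      simp_rw [mul_comm _ ((starRingEnd ℂ) _)]
      have hΨint : Integrable (fun z => conj ((g : Circle → ℂ) z) * (f : Circle → ℂ) z) μC := by
        simpa [RCLike.inner_apply, mul_comm] using L2.integrable_inner (𝕜 := ℂ) g f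
      have hsq : (Real.sqrt N : ℂ) * (Real.sqrt N : ℂ) = (N : ℂ) := by
        rw [← Complex.ofReal_mul, Real.mul_self_sqrt (Nat.cast_nonneg N)]
        norm_cast
      have hpt : ∀ᵐ z ∂μC, conj ((Sn i g : Circle → ℂ) z) * ((Sm j f : Circle → ℂ) z)
          = (N : ℂ) * ((conj (n i z) * m j z)
              * (conj ((g : Circle → ℂ) (z ^ N)) * (f : Circle → ℂ) (z ^ N))) := by
        filter_upwards [hSn i g, hSm j f] with z h1 h2
        rw [h1, h2]
        simp only [map_mul, Complex.conj_ofReal]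
        rw [← hsq]; ring
      calc ∫ z, conj ((Sn i g : Circle → ℂ) z) * ((Sm j f : Circle → ℂ) z) ∂μC
          = ∫ z, (N : ℂ) * ((conj (n i z) * m j z)
              * (conj ((g : Circle → ℂ) (z ^ N)) * (f : Circle → ℂ) (z ^ N))) ∂μC :=
            integral_congr_ae hpt
        _ = (N : ℂ) * ∫ z, (conj (n i z) * m j z)
              * (conj ((g : Circle → ℂ) (z ^ N)) * (f : Circle → ℂ) (z ^ N)) ∂μC :=
            integral_const_mul _ _
        _ = ∫ z, rootSum N (fun w => conj (n i w) * m j w) z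
              * (conj ((g : Circle → ℂ) z) * (f : Circle → ℂ) z) ∂μC :=
            (key_int hN0 _ _ hΦm hΦb hΨint).symm
        _ = ∫ z, conj ((g : Circle → ℂ) z)
              * (rootSum N (fun w => conj (n i w) * m j w) z * (f : Circle → ℂ) z) ∂μC :=
            integral_congr_ae (Filter.Eventually.of_forall fun z => by ring)
        _ = ∫ z, conj ((g : Circle → ℂ) z) * ((hAf.toLp _ : Circle → ℂ) z) ∂μC := by
            refine integral_congr_ae ?_
            filter_upwards [hAf.coeFn_toLp] with z hz
            rw [hz]
    refine (key ▸ hAf.coeFn_toLp : _)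
  · filter_upwards [hQMFm, hQMFn] with z h1 h2
    exact unitary_of_qmf m n z h1 h2
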